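/- Let r ≥ 1 and let (v_1,…,v_r) be a system of linear functionals on ℂ[x] whose moment matrix M admits a Gauss–Borel factorisation M = A·B. Define monic polynomials P_n (n ∈ ℕ) by the relations x^n = Σ_{k=0}^{n} A_{n,k} P_k(x). Then for all n, k ∈ ℕ and 0 ≤ j ≤ r−1 one has ⟨v_{j+1}, x^k P_n(x)⟩ = B_{n, rk+j}; in particular deg P_n = n, ⟨v_{j+1}, x^k P_n⟩ = 0 whenever rk + j < n, and ⟨v_{j+1}, x^k P_n⟩ = B_{n,n} ≠ 0 whenever rk + j = n, so (P_n) is the sequence of type II multiple orthogonal polynomials on the step-line with respect to (v_1,…,v_r). -/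

import Mathlib

/-!
The powers `X ^ n` arise from the `P m` through the unit lower triangular matrix `A`, so
`P n = X ^ n - ∑_{m < n} A n m • P m`, which gives monicity and the degree by induction.
Applying the functional `p ↦ ⟨v_{j+1}, x ^ k p⟩` to `x ^ n = ∑ A n m P m` expresses the moments
`M n (r k + j)` through `A` and the numbers `⟨v_{j+1}, x ^ k P m⟩`; since `M = A B` as well and a
unit lower triangular system has a unique solution, these numbers are the entries of `B`.
-/

open Polynomial Finset

noncomputable section

/-- A linear functional on `ℂ[x]`. -/
abbrev LF := Polynomial ℂ →ₗ[ℂ] ℂ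

/-- The moment matrix of a system of `r` linear functionals (0-indexed:
`v j` is the paper's `v_{j+1}`): entry `(n, r*k+j)` is `⟨v_{j+1}, x^{k+n}⟩`. -/
def momentMatrix (r : ℕ) (v : ℕ → LF) (n ℓ : ℕ) : ℂ :=
  v (ℓ % r) (Polynomial.X ^ (ℓ / r + n))

/-- A Gauss–Borel factorisation `M = A·B` of the moment matrix: `A` unit
lower triangular, `B` upper triangular with nonzero diagonal. -/
structure GaussBorel (r : ℕ) (v : ℕ → LF) (A B : ℕ → ℕ → ℂ) : Prop where
  A_diag : ∀ n, A n n = 1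
  A_upper : ∀ n ℓ, n < ℓ → A n ℓ = 0
  B_lower : ∀ n ℓ, ℓ < n → B n ℓ = 0
  B_diag : ∀ n, B n n ≠ 0
  factor : ∀ n ℓ, momentMatrix r v n ℓ = ∑ k ∈ Finset.range (n + 1), A n k * B k ℓ

section UnitriangularSystem

variable {R M : Type*} [Ring R] [AddCommGroup M] [Module R M] {A : ℕ → ℕ → R}

lemma eq_sub_sum_of_eq_sum_unitriangular {n : ℕ} (hA : A n n = 1) {x : ℕ → M} {y : M}
    (h : y = ∑ m ∈ range (n + 1), A n m • x m) :
    x n = y - ∑ m ∈ range n, A n m • x m := by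
  rw [h, sum_range_succ, hA, one_smul, add_sub_cancel_left]

lemma eq_of_sum_smul_eq_unitriangular (hA : ∀ n, A n n = 1) {x y : ℕ → M}
    (h : ∀ n, ∑ m ∈ range (n + 1), A n m • x m = ∑ m ∈ range (n + 1), A n m • y m) :
    x = y := by
  funext n
  induction n using Nat.strong_induction_on with
  | _ n ih =>
    rw [eq_sub_sum_of_eq_sum_unitriangular (hA n) (h n).symm,
      eq_sub_sum_of_eq_sum_unitriangular (hA n) rfl (x := y)]
    congr 1
    exact sum_congr rfl fun m hm => by rw [ih m (mem_range.mp hm)]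

end UnitriangularSystem

lemma monic_and_degree_eq_of_X_pow_eq_sum {R : Type*} [Ring R] [Nontrivial R]
    {A : ℕ → ℕ → R} (hA : ∀ n, A n n = 1) {P : ℕ → R[X]}
    (hP : ∀ n, (X : R[X]) ^ n = ∑ m ∈ range (n + 1), C (A n m) * P m) (n : ℕ) :
    (P n).Monic ∧ (P n).degree = n := by
  induction n using Nat.strong_induction_on with
  | _ n ih =>
    have hrec : P n = X ^ n - ∑ m ∈ range n, A n m • P m :=
      eq_sub_sum_of_eq_sum_unitriangular (hA n) (by simpa only [smul_eq_C_mul] using hP n)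
    have hlow : (∑ m ∈ range n, A n m • P m).degree < ((X : R[X]) ^ n).degree := by
      rw [degree_X_pow, ← mem_degreeLT]
      refine Submodule.sum_mem _ fun m hm => Submodule.smul_mem _ _ ?_
      rw [mem_degreeLT, (ih m (mem_range.mp hm)).2]
      exact_mod_cast mem_range.mp hm
    rw [hrec]
    exact ⟨(monic_X_pow n).sub_of_left hlow,
      (degree_sub_eq_left_of_degree_lt hlow).trans (degree_X_pow n)⟩

lemma momentMatrix_mul_add {r j : ℕ} (hj : j < r) (v : ℕ → LF) (n k : ℕ) :
    momentMatrix r v n (r * k + j) = v j (X ^ k * X ^ n) := by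
  rw [momentMatrix, Nat.mul_add_mod, Nat.mod_eq_of_lt hj, Nat.mul_add_div (by omega),
    Nat.div_eq_of_lt hj, add_zero, pow_add]

theorem GaussBorel.apply_X_pow_mul {r : ℕ} {v : ℕ → LF} {A B : ℕ → ℕ → ℂ}
    (hGB : GaussBorel r v A B) {P : ℕ → ℂ[X]}
    (hP : ∀ n, (X : ℂ[X]) ^ n = ∑ m ∈ range (n + 1), C (A n m) * P m)
    {j : ℕ} (hj : j < r) (n k : ℕ) :
    v j (X ^ k * P n) = B n (r * k + j) := by
  refine congrFun (eq_of_sum_smul_eq_unitriangular hGB.A_diag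
    (x := fun m => v j (X ^ k * P m)) (y := fun m => B m (r * k + j)) fun n => ?_) n
  calc ∑ m ∈ range (n + 1), A n m • v j (X ^ k * P m)
      = v j (X ^ k * X ^ n) := by
        rw [hP n, mul_sum, map_sum]
        exact sum_congr rfl fun m _ => by rw [mul_left_comm, ← smul_eq_C_mul, map_smul]
    _ = momentMatrix r v n (r * k + j) := (momentMatrix_mul_add hj v n k).symm
    _ = ∑ m ∈ range (n + 1), A n m • B m (r * k + j) := hGB.factor n _

theorem stmt0 (r : ℕ) (v : ℕ → LF) (A B : ℕ → ℕ → ℂ)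
    (hGB : GaussBorel r v A B) (P : ℕ → Polynomial ℂ)
    (hP : ∀ n, (Polynomial.X : Polynomial ℂ) ^ n
      = ∑ k ∈ Finset.range (n + 1), Polynomial.C (A n k) * P k) :
    (∀ n k j, j < r → v j (Polynomial.X ^ k * P n) = B n (r * k + j)) ∧
    (∀ n, (P n).Monic ∧ (P n).natDegree = n) ∧
    (∀ n k j, j < r → r * k + j < n → v j (Polynomial.X ^ k * P n) = 0) ∧
    (∀ n k j, j < r → r * k + j = n →
      v j (Polynomial.X ^ k * P n) = B n n ∧ B n n ≠ 0) := by
  have key : ∀ n k j, j < r → v j (X ^ k * P n) = B n (r * k + j) :=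
    fun n k _ hj => hGB.apply_X_pow_mul hP hj n k
  refine ⟨key, fun n => ?_, fun n k j hj hlt => ?_, fun n k j hj heq => ?_⟩
  · obtain ⟨hmonic, hdeg⟩ := monic_and_degree_eq_of_X_pow_eq_sum hGB.A_diag hP n
    exact ⟨hmonic, natDegree_eq_of_degree_eq_some hdeg⟩
  · rw [key n k j hj, hGB.B_lower _ _ hlt]
  · exact ⟨by rw [key n k j hj, heq], hGB.B_diag n⟩
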